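/- arXiv:0912.1818 — 2 statements merged into one kernel-verified Lean document; each statement's English description precedes it below -/
import Mathlib

section
/- For every integer n ≥ 1 and every j ≥ 1, there exists a real number λ with −b_{j+1} < λ < −μ_j and λ + n² K(λ) = 0; that is, G_n has a real zero in the open interval (−b_{j+1}, −μ_j). -/
/-! On `(-b_{j+1}, -μ_j]` the real function `g x = x + n² K(x)` is continuous, and
`g(-μ_j) = -μ_j < 0` since `K(-μ_j) = 0`. As `x ↓ -b_{j+1}` the pole term
`n² a_{j+1} / (x + b_{j+1})` tends to `+∞`, while the terms with `k ≤ j` stay bounded and those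
with `k > j + 1` are positive; so `g` is positive somewhere in the interval, and the
intermediate value theorem gives the zero. -/

open Filter Topology

/- Indexing convention: the paper's sequences `(a_k)_{k ≥ 1}`, `(b_k)_{k ≥ 1}` are
encoded as functions `a b : ℕ → ℝ`, where index `k : ℕ` corresponds to the paper's
index `k + 1` (so `b 0 = b_1`, etc.). -/

/-- `GPK a b z = K(z) = ∑ a_k / (z + b_k)`. -/
noncomputable def GPK (a b : ℕ → ℝ) (z : ℂ) : ℂ := ∑' k : ℕ, (a k : ℂ) / (z + (b k : ℂ))

/-- `GPG a b n z = G_n(z) = z + n² K(z)`. -/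
noncomputable def GPG (a b : ℕ → ℝ) (n : ℕ) (z : ℂ) : ℂ := z + (n : ℂ) ^ 2 * GPK a b z

open Set Finset

noncomputable def GPKReal (a b : ℕ → ℝ) (x : ℝ) : ℝ := ∑' k, a k / (x + b k)

lemma tendsto_div_add_nhdsGT_neg {c : ℝ} (hc : 0 < c) (β : ℝ) :
    Tendsto (fun x : ℝ => c / (x + β)) (𝓝[>] (-β)) atTop := by
  have hshift : Tendsto (fun x : ℝ => x + β) (𝓝[>] (-β)) (𝓝[>] 0) := by
    refine tendsto_nhdsWithin_of_tendsto_nhds_of_eventually_within _ ?_ ?_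
    · exact ((continuous_add_const β).tendsto' (-β) 0 (by ring)).mono_left nhdsWithin_le_nhds
    · exact eventually_nhdsWithin_of_forall fun x (hx : -β < x) => show 0 < x + β by linarith
  simpa only [div_eq_mul_inv, Function.comp_def] using
    (tendsto_inv_nhdsGT_zero.comp hshift).const_mul_atTop hc

section

variable {a b : ℕ → ℝ}

lemma GPK_ofReal (x : ℝ) : GPK a b x = GPKReal a b x := by
  rw [GPK, GPKReal, Complex.ofReal_tsum]
  push_cast
  rfl

lemma summable_div_add_of_le_abs (hsA : Summable a) {δ x : ℝ} (hδ : 0 < δ)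
    (hx : ∀ k, δ ≤ |x + b k|) : Summable fun k => a k / (x + b k) := by
  refine Summable.of_norm_bounded (hsA.abs.div_const δ) fun k => ?_
  rw [Real.norm_eq_abs, abs_div]
  exact div_le_div_of_nonneg_left (abs_nonneg _) hδ (hx k)

lemma continuousOn_GPKReal (hsA : Summable a) {s : Set ℝ} {δ : ℝ} (hδ : 0 < δ)
    (hs : ∀ k, ∀ x ∈ s, δ ≤ |x + b k|) : ContinuousOn (GPKReal a b) s := by
  refine continuousOn_tsum (u := fun k => |a k| / δ) (fun k => ?_) (hsA.abs.div_const δ)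
    fun k x hx => ?_
  · refine continuousOn_const.div (by fun_prop) fun x hx h0 => ?_
    have := hs k x hx
    rw [h0, abs_zero] at this
    linarith
  · rw [Real.norm_eq_abs, abs_div]
    exact div_le_div_of_nonneg_left (abs_nonneg _) hδ (hs k x hx)

lemma le_abs_add_of_mem_Icc (hb : Monotone b) (j : ℕ) {c d x : ℝ} (hx : x ∈ Icc c d) (k : ℕ) :
    min (c + b (j + 1)) (-b j - d) ≤ |x + b k| := by
  rcases le_or_gt k j with hk | hk
  · have := hb hk
    exact (min_le_right _ _).trans (le_trans (by linarith [hx.2]) (neg_le_abs _))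
  · have := hb (Nat.succ_le_of_lt hk)
    exact (min_le_left _ _).trans (le_trans (by linarith [hx.1]) (le_abs_self _))

lemma sum_range_le_GPKReal (ha : ∀ k, 0 ≤ a k) (hsA : Summable a) (hb : Monotone b) {j : ℕ}
    {x : ℝ} (hx : x ∈ Ioo (-b (j + 1)) (-b j)) :
    ∑ k ∈ range (j + 2), a k / (x + b k) ≤ GPKReal a b x := by
  have hδ : 0 < min (x + b (j + 1)) (-b j - x) := lt_min (by linarith [hx.1]) (by linarith [hx.2])
  refine Summable.sum_le_tsum _ (fun k hk => ?_)
    (summable_div_add_of_le_abs hsA hδ (le_abs_add_of_mem_Icc hb j ⟨le_rfl, le_rfl⟩))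
  have : b (j + 1) ≤ b k := hb (by simp at hk; omega)
  exact div_nonneg (ha k) (by linarith [hx.1])

lemma tendsto_add_mul_GPKReal_nhdsGT (ha : ∀ k, 0 < a k) (hsA : Summable a) (hb : StrictMono b)
    (j : ℕ) {N : ℝ} (hN : 0 < N) :
    Tendsto (fun x => x + N * GPKReal a b x) (𝓝[>] (-b (j + 1))) atTop := by
  set P : ℝ → ℝ := fun x => x + N * ∑ k ∈ range (j + 1), a k / (x + b k)
  have hP : ContinuousAt P (-b (j + 1)) := by
    refine continuousAt_id.add (continuousAt_const.mul (tendsto_finsetSum _ fun k hk => ?_))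
    have : b k < b (j + 1) := hb (by simp at hk; omega)
    exact continuousAt_const.div (by fun_prop) (by linarith)
  have hlower : Tendsto (fun x => P x + N * a (j + 1) / (x + b (j + 1))) (𝓝[>] (-b (j + 1)))
      atTop :=
    (hP.tendsto.mono_left nhdsWithin_le_nhds).add_atTop
      (tendsto_div_add_nhdsGT_neg (mul_pos hN (ha _)) _)
  refine tendsto_atTop_mono' _ ?_ hlower
  filter_upwards [Ioo_mem_nhdsGT (neg_lt_neg (hb (Nat.lt_succ_self j)))] with x hx
  have h := mul_le_mul_of_nonneg_left (sum_range_le_GPKReal (fun k => (ha k).le) hsA hb.monotone hx) hN.le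
  rw [sum_range_succ, mul_add, ← mul_div_assoc] at h
  simp only [P]
  linarith

end

theorem real_zero_exists_general
    (a b : ℕ → ℝ) (α : ℝ)
    (ha : ∀ k, 0 < a k) (hsum : HasSum a (α ^ 2))
    (hb0 : 0 ≤ b 0) (hbmono : StrictMono b)
    (μ : ℕ → ℝ)
    (hμ : ∀ j, b j < μ j ∧ μ j < b (j + 1) ∧ GPK a b (-(μ j : ℂ)) = 0)
    (n : ℕ) (hn : 1 ≤ n) (j : ℕ) :
    ∃ lam : ℝ, -(b (j + 1)) < lam ∧ lam < -(μ j) ∧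
      (lam : ℂ) + (n : ℂ) ^ 2 * GPK a b (lam : ℂ) = 0 := by
  obtain ⟨hbμ, hμb, hKμ⟩ := hμ j
  have hsA := hsum.summable
  set g : ℝ → ℝ := fun x => x + (n : ℝ) ^ 2 * GPKReal a b x
  have hgμ : g (-μ j) < 0 := by
    have hK : GPKReal a b (-μ j) = 0 := by
      have := GPK_ofReal (a := a) (b := b) (-μ j)
      push_cast at this
      exact_mod_cast this.symm.trans hKμ
    have : 0 ≤ b j := hb0.trans (hbmono.monotone (Nat.zero_le j))
    simp only [g, hK]
    linarith
  obtain ⟨c, hgc, hc⟩ := ((tendsto_add_mul_GPKReal_nhdsGT ha hsA hbmono j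
    (pow_pos (Nat.cast_pos.mpr hn) 2)).eventually_gt_atTop 0 |>.and
    (Ioo_mem_nhdsGT (neg_lt_neg hμb))).exists
  have hcont : ContinuousOn g (Icc c (-μ j)) := by
    have hδ : 0 < min (c + b (j + 1)) (-b j - -μ j) := lt_min (by linarith [hc.1]) (by linarith)
    exact continuousOn_id.add (continuousOn_const.mul (continuousOn_GPKReal hsA hδ
      fun k x hx => le_abs_add_of_mem_Icc hbmono.monotone j hx k))
  obtain ⟨lam, hlam, hg0⟩ := intermediate_value_Ioo' hc.2.le hcont ⟨hgμ, hgc⟩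
  refine ⟨lam, hc.1.trans hlam.1, hlam.2, ?_⟩
  have hzero : lam + (n : ℝ) ^ 2 * GPKReal a b lam = 0 := hg0
  rw [GPK_ofReal]
  exact_mod_cast hzero

/-- For every `n ≥ 1` and `j`, `G_n` has a real zero in `(-b_{j+1}, -μ_j)`. -/
theorem real_zero_exists
    (a b : ℕ → ℝ) (α : ℝ)
    (ha : ∀ k, 0 < a k) (hα : 0 < α) (hsum : HasSum a (α ^ 2))
    (hb0 : 0 ≤ b 0) (hbmono : StrictMono b) (hbtop : Tendsto b atTop atTop)
    (μ : ℕ → ℝ)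
    (hμ : ∀ j, b j < μ j ∧ μ j < b (j + 1) ∧ GPK a b (-(μ j : ℂ)) = 0)
    (n : ℕ) (hn : 1 ≤ n) (j : ℕ) :
    ∃ lam : ℝ, -(b (j + 1)) < lam ∧ lam < -(μ j) ∧
      (lam : ℂ) + (n : ℂ) ^ 2 * GPK a b (lam : ℂ) = 0 :=
  real_zero_exists_general a b α ha hsum hb0 hbmono μ hμ n hn j
end

section
/- For every integer n ≥ 1 and every j ≥ 1, G_n has no zeros in the half-open real interval [−μ_j, −b_j): indeed G_n(x) = x + n² K(x) < 0 for all real x with −μ_j ≤ x < −b_j. -/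
open Filter Topology

/-!
On the real axis `K` is a real series. For `-μ_j ≤ x < -b_j` every term of `K(x)` is at most
the corresponding term of `K(-μ_j) = 0`: the poles `-b_k` with `k ≤ j` lie to the right of both
points and those with `k > j` to the left, and `t ↦ a/(t + b)` decreases on each side of its pole.
Hence `K(x) ≤ 0`, and `G_n(x) = x + n² K(x) < 0` because `x < -b_j ≤ 0`.
-/

section RealSeries

variable {a b : ℕ → ℝ}

lemma summable_div_add_of_tendsto_atTop (ha : ∀ k, 0 ≤ a k) (hsum : Summable a)
    (hb : Tendsto b atTop atTop) (y : ℝ) : Summable fun k => a k / (y + b k) := by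
  refine Summable.of_norm_bounded_eventually_nat hsum ?_
  filter_upwards [hb.eventually_ge_atTop (1 - y)] with k hk
  rw [Real.norm_eq_abs, abs_div, abs_of_nonneg (ha k), abs_of_pos (by linarith)]
  exact div_le_self (ha k) (by linarith)

lemma div_add_le_div_add_of_mem_gap (ha : ∀ k, 0 ≤ a k) (hb : Monotone b) {j : ℕ} {x y : ℝ}
    (hyx : y ≤ x) (hx : x < -b j) (hy : -b (j + 1) < y) (k : ℕ) :
    a k / (x + b k) ≤ a k / (y + b k) := by
  rcases le_or_gt k j with hk | hk
  · have hxk : x + b k < 0 := by linarith [hb hk]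
    rw [div_eq_mul_one_div, div_eq_mul_one_div (a k)]
    exact mul_le_mul_of_nonneg_left (one_div_le_one_div_of_neg_of_le hxk (by linarith)) (ha k)
  · have hyk : 0 < y + b k := by linarith [hb (Nat.succ_le_of_lt hk)]
    exact div_le_div_of_nonneg_left (ha k) hyk (by linarith)

lemma tsum_div_add_le_of_mem_gap (ha : ∀ k, 0 ≤ a k) (hsum : Summable a) (hb : Monotone b)
    (hbtop : Tendsto b atTop atTop) {j : ℕ} {x y : ℝ}
    (hyx : y ≤ x) (hx : x < -b j) (hy : -b (j + 1) < y) :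
    ∑' k, a k / (x + b k) ≤ ∑' k, a k / (y + b k) :=
  Summable.tsum_le_tsum (div_add_le_div_add_of_mem_gap ha hb hyx hx hy)
    (summable_div_add_of_tendsto_atTop ha hsum hbtop x)
    (summable_div_add_of_tendsto_atTop ha hsum hbtop y)

end RealSeries

lemma GPK_ofReal_s12 (a b : ℕ → ℝ) (x : ℝ) :
    GPK a b x = ((∑' k, a k / (x + b k) : ℝ) : ℂ) := by
  rw [GPK, Complex.ofReal_tsum]
  push_cast
  rfl

lemma GPG_ofReal (a b : ℕ → ℝ) (n : ℕ) (x : ℝ) :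
    GPG a b n x = ((x + (n : ℝ) ^ 2 * ∑' k, a k / (x + b k) : ℝ) : ℂ) := by
  rw [GPG, GPK_ofReal_s12]
  push_cast
  rfl

theorem no_zero_in_Ico_general
    (a b : ℕ → ℝ) (α : ℝ)
    (ha : ∀ k, 0 < a k) (hsum : HasSum a (α ^ 2))
    (hb0 : 0 ≤ b 0) (hbmono : StrictMono b) (hbtop : Tendsto b atTop atTop)
    (μ : ℕ → ℝ)
    (hμ : ∀ j, b j < μ j ∧ μ j < b (j + 1) ∧ GPK a b (-(μ j : ℂ)) = 0)
    (n : ℕ) (j : ℕ)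
    (x : ℝ) (hx1 : -(μ j) ≤ x) (hx2 : x < -(b j)) :
    (GPG a b n (x : ℂ)).im = 0 ∧ (GPG a b n (x : ℂ)).re < 0 := by
  obtain ⟨-, hμb, hKμ⟩ := hμ j
  have hKμ' : ∑' k, a k / (-μ j + b k) = 0 := by
    rw [← Complex.ofReal_neg, GPK_ofReal_s12] at hKμ
    exact_mod_cast hKμ
  have hK : ∑' k, a k / (x + b k) ≤ 0 :=
    hKμ' ▸ tsum_div_add_le_of_mem_gap (fun k => (ha k).le) hsum.summable hbmono.monotone hbtop
      hx1 hx2 (by linarith)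
  have hx : x < 0 := by linarith [hbmono.monotone (Nat.zero_le j)]
  rw [GPG_ofReal, Complex.ofReal_im, Complex.ofReal_re]
  exact ⟨rfl, add_neg_of_neg_of_nonpos hx (mul_nonpos_of_nonneg_of_nonpos (sq_nonneg _) hK)⟩

/-- `G_n(x) = x + n² K(x) < 0` (in particular `G_n(x) ≠ 0`) for real
`x ∈ [-μ_j, -b_j)`. -/
theorem no_zero_in_Ico
    (a b : ℕ → ℝ) (α : ℝ)
    (ha : ∀ k, 0 < a k) (hα : 0 < α) (hsum : HasSum a (α ^ 2))
    (hb0 : 0 ≤ b 0) (hbmono : StrictMono b) (hbtop : Tendsto b atTop atTop)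
    (μ : ℕ → ℝ)
    (hμ : ∀ j, b j < μ j ∧ μ j < b (j + 1) ∧ GPK a b (-(μ j : ℂ)) = 0)
    (n : ℕ) (hn : 1 ≤ n) (j : ℕ)
    (x : ℝ) (hx1 : -(μ j) ≤ x) (hx2 : x < -(b j)) :
    (GPG a b n (x : ℂ)).im = 0 ∧ (GPG a b n (x : ℂ)).re < 0 :=
  no_zero_in_Ico_general a b α ha hsum hb0 hbmono hbtop μ hμ n j x hx1 hx2
end
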